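/- Let a, b, c, w, z, f : ℝ² → ℝ be C¹ functions, let θ, φ : ℝ² → ℝ be C² functions with ℒθ = 0 on ℝ² (where ℒθ := aθ_xx + bθ_yy + 2cθ_xy + (a_x+c_y+w)θ_x + (b_y+c_x+z)θ_y − fθ), and let p : ℝ² → ℝ be a C¹ function satisfying the p-equations: (θφp)_y = a(φθ_x − θφ_x) + c(φθ_y − θφ_y) + wθφ and (θφp)_x = −[c(φθ_x − θφ_x) + b(φθ_y − θφ_y) + zθφ] on ℝ². Define α := aφθ, β := bφθ, γ := (c−p)φθ, δ := (c+p)φθ. Then for every C² function X : ℝ² → ℝ and every point of ℝ²: φ·ℒ(θX) = α X_xx + β X_yy + (γ+δ) X_xy + (α_x + δ_y) X_x + (β_y + γ_x) X_y; that is, the gauge transformation L ↦ φ̂ ℒ θ̂ brings ℒ to elementary transformable form. -/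

import Mathlib

/-- Partial derivative with respect to the first variable. -/
noncomputable def px (f : ℝ × ℝ → ℝ) : ℝ × ℝ → ℝ :=
  fun p => fderiv ℝ f p (1, 0)

/-- Partial derivative with respect to the second variable. -/
noncomputable def py (f : ℝ × ℝ → ℝ) : ℝ × ℝ → ℝ :=
  fun p => fderiv ℝ f p (0, 1)

/-- The general second-order operator
`ℒψ = aψ_xx + bψ_yy + 2cψ_xy + (a_x+c_y+w)ψ_x + (b_y+c_x+z)ψ_y − fψ`. -/
noncomputable def Lop (a b c w z f ψ : ℝ × ℝ → ℝ) : ℝ × ℝ → ℝ :=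
  fun p =>
    a p * px (px ψ) p + b p * py (py ψ) p + 2 * c p * px (py ψ) p
      + (px a p + py c p + w p) * px ψ p
      + (py b p + px c p + z p) * py ψ p - f p * ψ p

/-!
By the Leibniz rule, `ℒ(θX) = X ℒθ + θ (aX_xx + bX_yy + 2cX_xy) + A X_x + B X_y` with
`A = 2aθ_x + 2cθ_y + (a_x+c_y+w)θ` and `B = 2cθ_x + 2bθ_y + (b_y+c_x+z)θ`, and `ℒθ = 0` kills
the first term. The `p`-equations are exactly what makes `α_x + δ_y = φA` and `β_y + γ_x = φB`:
the derivatives of `±pφθ` supply the antisymmetric terms `a(φθ_x − θφ_x) + …` that turn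
`(aφθ)_x + (cφθ)_y` into `φA`.
-/

section PartialDerivatives

variable {f g : ℝ × ℝ → ℝ} {p : ℝ × ℝ}

lemma px_mul (hf : DifferentiableAt ℝ f p) (hg : DifferentiableAt ℝ g p) :
    px (fun q => f q * g q) p = px f p * g p + f p * px g p := by
  simp only [px, fderiv_fun_mul hf hg, add_apply,
    smul_apply, smul_eq_mul]
  ring

lemma py_mul (hf : DifferentiableAt ℝ f p) (hg : DifferentiableAt ℝ g p) :
    py (fun q => f q * g q) p = py f p * g p + f p * py g p := by
  simp only [py, fderiv_fun_mul hf hg, add_apply,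
    smul_apply, smul_eq_mul]
  ring

lemma px_add (hf : DifferentiableAt ℝ f p) (hg : DifferentiableAt ℝ g p) :
    px (fun q => f q + g q) p = px f p + px g p := by
  simp [px, fderiv_fun_add hf hg]

lemma py_add (hf : DifferentiableAt ℝ f p) (hg : DifferentiableAt ℝ g p) :
    py (fun q => f q + g q) p = py f p + py g p := by
  simp [py, fderiv_fun_add hf hg]

lemma px_sub (hf : DifferentiableAt ℝ f p) (hg : DifferentiableAt ℝ g p) :
    px (fun q => f q - g q) p = px f p - px g p := by
  simp [px, fderiv_fun_sub hf hg]

lemma ContDiff.differentiable_px (hf : ContDiff ℝ 2 f) : Differentiable ℝ (px f) :=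
  ((hf.fderiv_right one_add_one_eq_two.le).clm_apply contDiff_const).differentiable one_ne_zero

lemma ContDiff.differentiable_py (hf : ContDiff ℝ 2 f) : Differentiable ℝ (py f) :=
  ((hf.fderiv_right one_add_one_eq_two.le).clm_apply contDiff_const).differentiable one_ne_zero

end PartialDerivatives

lemma Lop_mul {a b c w z f θ X : ℝ × ℝ → ℝ} (hθ : ContDiff ℝ 2 θ) (hX : ContDiff ℝ 2 X)
    (p : ℝ × ℝ) :
    Lop a b c w z f (fun q => θ q * X q) p =
      X p * Lop a b c w z f θ p
        + θ p * (a p * px (px X) p + b p * py (py X) p + 2 * c p * px (py X) p)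
        + (2 * a p * px θ p + 2 * c p * py θ p + (px a p + py c p + w p) * θ p) * px X p
        + (2 * c p * px θ p + 2 * b p * py θ p + (py b p + px c p + z p) * θ p) * py X p := by
  have dθ := hθ.differentiable two_ne_zero
  have dX := hX.differentiable two_ne_zero
  have dθx := hθ.differentiable_px
  have dθy := hθ.differentiable_py
  have dXx := hX.differentiable_px
  have dXy := hX.differentiable_py
  have hx : px (fun q => θ q * X q) = fun q => px θ q * X q + θ q * px X q :=
    funext fun q => px_mul (dθ q) (dX q)
  have hy : py (fun q => θ q * X q) = fun q => py θ q * X q + θ q * py X q :=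
    funext fun q => py_mul (dθ q) (dX q)
  simp only [Lop, hx, hy]
  rw [px_add ((dθx p).fun_mul (dX p)) ((dθ p).fun_mul (dXx p)),
    px_mul (dθx p) (dX p), px_mul (dθ p) (dXx p),
    py_add ((dθy p).fun_mul (dX p)) ((dθ p).fun_mul (dXy p)),
    py_mul (dθy p) (dX p), py_mul (dθ p) (dXy p),
    px_add ((dθy p).fun_mul (dX p)) ((dθ p).fun_mul (dXy p)),
    px_mul (dθy p) (dX p), px_mul (dθ p) (dXy p)]
  ring

section PEquations

variable {a b c w z φ θ pfun : ℝ × ℝ → ℝ} {p : ℝ × ℝ}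

lemma px_add_py_of_py_eq (da : DifferentiableAt ℝ a p) (dc : DifferentiableAt ℝ c p)
    (dφ : DifferentiableAt ℝ φ p) (dθ : DifferentiableAt ℝ θ p)
    (dpfun : DifferentiableAt ℝ pfun p)
    (hpy : py (fun q => θ q * φ q * pfun q) p =
      a p * (φ p * px θ p - θ p * px φ p)
        + c p * (φ p * py θ p - θ p * py φ p) + w p * θ p * φ p) :
    px (fun q => a q * φ q * θ q) p
        + py (fun q => c q * φ q * θ q + θ q * φ q * pfun q) p =
      φ p * (2 * a p * px θ p + 2 * c p * py θ p + (px a p + py c p + w p) * θ p) := by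
  rw [py_add ((dc.fun_mul dφ).fun_mul dθ) ((dθ.fun_mul dφ).fun_mul dpfun), hpy,
    px_mul (da.fun_mul dφ) dθ, px_mul da dφ, py_mul (dc.fun_mul dφ) dθ, py_mul dc dφ]
  ring

lemma py_sub_px_of_px_eq (db : DifferentiableAt ℝ b p) (dc : DifferentiableAt ℝ c p)
    (dφ : DifferentiableAt ℝ φ p) (dθ : DifferentiableAt ℝ θ p)
    (dpfun : DifferentiableAt ℝ pfun p)
    (hpx : px (fun q => θ q * φ q * pfun q) p =
      -(c p * (φ p * px θ p - θ p * px φ p)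
        + b p * (φ p * py θ p - θ p * py φ p) + z p * θ p * φ p)) :
    py (fun q => b q * φ q * θ q) p
        + px (fun q => c q * φ q * θ q - θ q * φ q * pfun q) p =
      φ p * (2 * c p * px θ p + 2 * b p * py θ p + (py b p + px c p + z p) * θ p) := by
  rw [px_sub ((dc.fun_mul dφ).fun_mul dθ) ((dθ.fun_mul dφ).fun_mul dpfun), hpx,
    py_mul (db.fun_mul dφ) dθ, py_mul db dφ, px_mul (dc.fun_mul dφ) dθ, px_mul dc dφ]
  ring

end PEquations

theorem gauge_brings_elementary_transformable_general
    (a b c w z f θ φ pfun : ℝ × ℝ → ℝ)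
    (ha : ContDiff ℝ 1 a) (hb : ContDiff ℝ 1 b) (hc : ContDiff ℝ 1 c)
    (hθ : ContDiff ℝ 2 θ) (hφ : ContDiff ℝ 2 φ)
    (hLθ : ∀ p : ℝ × ℝ, Lop a b c w z f θ p = 0)
    (hpfun : ContDiff ℝ 1 pfun)
    (hpy : ∀ p : ℝ × ℝ,
      py (fun q => θ q * φ q * pfun q) p =
        a p * (φ p * px θ p - θ p * px φ p)
        + c p * (φ p * py θ p - θ p * py φ p) + w p * θ p * φ p)
    (hpx : ∀ p : ℝ × ℝ,
      px (fun q => θ q * φ q * pfun q) p =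
        -(c p * (φ p * px θ p - θ p * px φ p)
          + b p * (φ p * py θ p - θ p * py φ p) + z p * θ p * φ p))
    (α β γ δ : ℝ × ℝ → ℝ)
    (hα : ∀ p : ℝ × ℝ, α p = a p * φ p * θ p)
    (hβ : ∀ p : ℝ × ℝ, β p = b p * φ p * θ p)
    (hγ : ∀ p : ℝ × ℝ, γ p = (c p - pfun p) * φ p * θ p)
    (hδ : ∀ p : ℝ × ℝ, δ p = (c p + pfun p) * φ p * θ p) :
    ∀ X : ℝ × ℝ → ℝ, ContDiff ℝ 2 X → ∀ p : ℝ × ℝ,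
      φ p * Lop a b c w z f (fun q => θ q * X q) p =
        α p * px (px X) p + β p * py (py X) p + (γ p + δ p) * px (py X) p
          + (px α p + py δ p) * px X p + (py β p + px γ p) * py X p := by
  intro X hX p
  have hα' : α = fun q => a q * φ q * θ q := funext hα
  have hβ' : β = fun q => b q * φ q * θ q := funext hβ
  have hγ' : γ = fun q => c q * φ q * θ q - θ q * φ q * pfun q :=
    funext fun q => by rw [hγ]; ring
  have hδ' : δ = fun q => c q * φ q * θ q + θ q * φ q * pfun q :=
    funext fun q => by rw [hδ]; ring
  have dθ := hθ.differentiable two_ne_zero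
  have dφ := hφ.differentiable two_ne_zero
  have da := ha.differentiable one_ne_zero
  have db := hb.differentiable one_ne_zero
  have dc := hc.differentiable one_ne_zero
  have dpfun := hpfun.differentiable one_ne_zero
  rw [Lop_mul hθ hX, hLθ p, hα', hβ', hγ', hδ',
    px_add_py_of_py_eq (da p) (dc p) (dφ p) (dθ p) (dpfun p) (hpy p),
    py_sub_px_of_px_eq (db p) (dc p) (dφ p) (dθ p) (dpfun p) (hpx p)]
  ring

/-- the gauge transformation `ℒ ↦ φ̂ℒθ̂` brings `ℒ` to elementary
transformable form with coefficients `(aφθ, bφθ, (c−p)φθ, (c+p)φθ)`. -/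
theorem gauge_brings_elementary_transformable
    (a b c w z f θ φ pfun : ℝ × ℝ → ℝ)
    (ha : ContDiff ℝ 1 a) (hb : ContDiff ℝ 1 b) (hc : ContDiff ℝ 1 c)
    (hw : ContDiff ℝ 1 w) (hz : ContDiff ℝ 1 z) (hf : ContDiff ℝ 1 f)
    (hθ : ContDiff ℝ 2 θ) (hφ : ContDiff ℝ 2 φ)
    (hLθ : ∀ p : ℝ × ℝ, Lop a b c w z f θ p = 0)
    (hpfun : ContDiff ℝ 1 pfun)
    (hpy : ∀ p : ℝ × ℝ,
      py (fun q => θ q * φ q * pfun q) p =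
        a p * (φ p * px θ p - θ p * px φ p)
        + c p * (φ p * py θ p - θ p * py φ p) + w p * θ p * φ p)
    (hpx : ∀ p : ℝ × ℝ,
      px (fun q => θ q * φ q * pfun q) p =
        -(c p * (φ p * px θ p - θ p * px φ p)
          + b p * (φ p * py θ p - θ p * py φ p) + z p * θ p * φ p))
    (α β γ δ : ℝ × ℝ → ℝ)
    (hα : ∀ p : ℝ × ℝ, α p = a p * φ p * θ p)
    (hβ : ∀ p : ℝ × ℝ, β p = b p * φ p * θ p)
    (hγ : ∀ p : ℝ × ℝ, γ p = (c p - pfun p) * φ p * θ p)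
    (hδ : ∀ p : ℝ × ℝ, δ p = (c p + pfun p) * φ p * θ p) :
    ∀ X : ℝ × ℝ → ℝ, ContDiff ℝ 2 X → ∀ p : ℝ × ℝ,
      φ p * Lop a b c w z f (fun q => θ q * X q) p =
        α p * px (px X) p + β p * py (py X) p + (γ p + δ p) * px (py X) p
          + (px α p + py δ p) * px X p + (py β p + px γ p) * py X p :=
  gauge_brings_elementary_transformable_general a b c w z f θ φ pfun ha hb hc hθ hφ hLθ hpfun hpy
    hpx α β γ δ hα hβ hγ hδ
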